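/- arXiv:1107.1790 — 5 statements merged into one kernel-verified Lean document; each statement's English description precedes it below -/
import Mathlib

section
/- Let R be a commutative ring, n : ℕ, and i₀, j₀ : Fin (n+1). Let Z be a unit of the ring Matrix (Fin (n+1)) (Fin (n+1)) R whose underlying matrix is unipotent upper triangular, and let M be an element of U_{i₀,j₀}. Then the conjugate Z * M * Z⁻¹ again belongs to U_{i₀,j₀}. (Together with closure under products and inverses, this says U_{i₀,j₀} is a normal subgroup of the group of unipotent upper triangular matrices.) -/
/-- A matrix is unipotent upper triangular: `1`s on the diagonal, `0`s below it. -/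
def IsUnipotentUT {R : Type*} [CommRing R] {n : ℕ}
    (M : Matrix (Fin (n + 1)) (Fin (n + 1)) R) : Prop :=
  (∀ i, M i i = 1) ∧ ∀ i j, j < i → M i j = 0

/-- Membership in `U_{i₀,j₀}`: unipotent upper triangular, and all off-diagonal
entries vanish except possibly those in positions `(i,j)` with `i ≤ i₀` and `j₀ ≤ j`. -/
def MemU {R : Type*} [CommRing R] {n : ℕ} (i₀ j₀ : Fin (n + 1))
    (M : Matrix (Fin (n + 1)) (Fin (n + 1)) R) : Prop :=
  IsUnipotentUT M ∧ ∀ i j, i ≠ j → ¬(i ≤ i₀ ∧ j₀ ≤ j) → M i j = 0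


/-- `U_{i₀,j₀}` is stable under conjugation by any unipotent upper
triangular unit `Z` of the matrix ring. -/
theorem stmt_3 {R : Type*} [CommRing R] {n : ℕ} (i₀ j₀ : Fin (n + 1))
    (Z : (Matrix (Fin (n + 1)) (Fin (n + 1)) R)ˣ)
    (hZ : IsUnipotentUT (Z : Matrix (Fin (n + 1)) (Fin (n + 1)) R))
    (M : Matrix (Fin (n + 1)) (Fin (n + 1)) R) (hM : MemU i₀ j₀ M) :
    MemU i₀ j₀ ((Z : Matrix (Fin (n + 1)) (Fin (n + 1)) R) * M *
      ((Z⁻¹ : (Matrix (Fin (n + 1)) (Fin (n + 1)) R)ˣ) :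
        Matrix (Fin (n + 1)) (Fin (n + 1)) R)) := by
  obtain ⟨⟨hMd, hMl⟩, hMo⟩ := hM
  set A : Matrix (Fin (n + 1)) (Fin (n + 1)) R := (Z : Matrix (Fin (n + 1)) (Fin (n + 1)) R)
    with hA
  set B : Matrix (Fin (n + 1)) (Fin (n + 1)) R :=
    ((Z⁻¹ : (Matrix (Fin (n + 1)) (Fin (n + 1)) R)ˣ) : Matrix (Fin (n + 1)) (Fin (n + 1)) R)
    with hB
  -- B is upper triangular
  have hBlt : ∀ i j : Fin (n + 1), j < i → B i j = 0 := by
    have : Invertible A := Z.invertible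
    have hbt : A.BlockTriangular (id : Fin (n + 1) → Fin (n + 1)) := fun i j h => hZ.2 i j h
    have hinv := Matrix.blockTriangular_inv_of_blockTriangular hbt
    intro i j h
    have : B = A⁻¹ := by rw [hB, hA, Matrix.coe_units_inv]
    rw [this]
    exact hinv h
  have hAB : A * B = 1 := by rw [hA, hB]; exact_mod_cast Z.mul_inv
  -- N = M - 1 is supported on i < j, i ≤ i₀, j₀ ≤ j
  set N : Matrix (Fin (n + 1)) (Fin (n + 1)) R := M - 1 with hN
  have hNz : ∀ k l : Fin (n + 1), ¬(k < l ∧ k ≤ i₀ ∧ j₀ ≤ l) → N k l = 0 := by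
    intro k l h
    rcases lt_trichotomy k l with hkl | hkl | hkl
    · have hne : k ≠ l := ne_of_lt hkl
      have : M k l = 0 := hMo k l hne (fun hc => h ⟨hkl, hc⟩)
      simp [hN, this, Matrix.one_apply_ne hne]
    · subst hkl; simp [hN, hMd k]
    · have hne : k ≠ l := (ne_of_lt hkl).symm
      have : M k l = 0 := hMl k l hkl
      simp [hN, this, Matrix.one_apply_ne hne]
  -- key: entries of A * N * B vanish outside the allowed region
  have key : ∀ i j : Fin (n + 1), ¬(i < j ∧ i ≤ i₀ ∧ j₀ ≤ j) → (A * N * B) i j = 0 := by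
    intro i j hij
    rw [Matrix.mul_assoc, Matrix.mul_apply]
    apply Finset.sum_eq_zero
    intro k _
    by_cases hik : k < i
    · rw [hZ.2 i k hik, zero_mul]
    · push_neg at hik
      rw [Matrix.mul_apply]
      have : ∑ l, N k l * B l j = 0 := by
        apply Finset.sum_eq_zero
        intro l _
        by_cases hlj : j < l
        · rw [hBlt l j hlj, mul_zero]
        · push_neg at hlj
          have : N k l = 0 := by
            apply hNz
            rintro ⟨hkl, hki₀, hj₀l⟩
            exact hij ⟨lt_of_le_of_lt hik (lt_of_lt_of_le hkl hlj),
              le_trans hik hki₀, le_trans hj₀l hlj⟩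
          rw [this, zero_mul]
      rw [this, mul_zero]
  have hconj : A * M * B = 1 + A * N * B := by
    have : M = 1 + N := by rw [hN]; abel
    rw [this]
    rw [mul_add, add_mul, mul_one, hAB]
  rw [show (Z : Matrix (Fin (n + 1)) (Fin (n + 1)) R) * M *
      ((Z⁻¹ : (Matrix (Fin (n + 1)) (Fin (n + 1)) R)ˣ) :
        Matrix (Fin (n + 1)) (Fin (n + 1)) R) = A * M * B from rfl, hconj]
  refine ⟨⟨fun i => ?_, fun i j h => ?_⟩, fun i j hne h => ?_⟩
  · have : (A * N * B) i i = 0 := key i i (fun hc => lt_irrefl i hc.1)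
    simp [Matrix.add_apply, this, Matrix.one_apply_eq]
  · have : (A * N * B) i j = 0 := key i j (fun hc => absurd hc.1 (not_lt.mpr h.le))
    simp [Matrix.add_apply, this, Matrix.one_apply_ne (ne_of_gt h)]
  · have : (A * N * B) i j = 0 := key i j (fun hc => h ⟨hc.2.1, hc.2.2⟩)
    simp [Matrix.add_apply, this, Matrix.one_apply_ne hne]
end

section
/- Let R be a commutative ring, n : ℕ, and i₀, j₀ : Fin (n+1) with i₀ < j₀. If M₁ and M₂ both belong to U_{i₀,j₀}, then (M₁ - 1) * (M₂ - 1) = 0, where 1 denotes the identity matrix. -/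
/-- if `i₀ < j₀`, then `(M₁ - 1) * (M₂ - 1) = 0` for `M₁, M₂ ∈ U_{i₀,j₀}`. -/
theorem stmt_4 {R : Type*} [CommRing R] {n : ℕ} (i₀ j₀ : Fin (n + 1)) (h : i₀ < j₀)
    (M₁ M₂ : Matrix (Fin (n + 1)) (Fin (n + 1)) R)
    (h₁ : MemU i₀ j₀ M₁) (h₂ : MemU i₀ j₀ M₂) :
    (M₁ - 1) * (M₂ - 1) = 0 := by
  have key : ∀ M : Matrix (Fin (n + 1)) (Fin (n + 1)) R, MemU i₀ j₀ M →
      ∀ i j, ¬(i ≤ i₀ ∧ j₀ ≤ j) → (M - 1) i j = 0 := by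
    intro M hM i j hij
    simp only [Matrix.sub_apply, Matrix.one_apply]
    by_cases hd : i = j
    · simp [hd, hM.1.1 j]
    · rw [hM.2 i j hd hij, if_neg hd, sub_zero]
  ext i j
  simp only [Matrix.mul_apply, Matrix.zero_apply]
  apply Finset.sum_eq_zero
  intro k _
  by_cases hk : k ≤ i₀
  · rw [key M₁ h₁ i k (fun hc => absurd (lt_of_lt_of_le h hc.2) (not_lt.2 hk)), zero_mul]
  · rw [key M₂ h₂ k j (fun hc => hk hc.1), mul_zero]
end

section
/- Let G be a group and N a normal subgroup of G such that any two elements of N commute. Let X ∈ G and Y ∈ N, and let H be the subgroup of G generated by {X, Y}. Then Y commutes with every element of the commutator subgroup ⁅H, H⁆ of H: for all W ∈ ⁅H, H⁆, Y * W = W * Y. -/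
/-- if `N` is a normal subgroup whose elements pairwise commute,
`X ∈ G`, `Y ∈ N`, and `H` is the subgroup generated by `{X, Y}`, then `Y`
commutes with every element of the commutator subgroup `⁅H, H⁆`. -/
theorem stmt_7 {G : Type*} [Group G] (N : Subgroup G) [N.Normal]
    (hcomm : ∀ a ∈ N, ∀ b ∈ N, a * b = b * a)
    (X Y : G) (hY : Y ∈ N) :
    ∀ W ∈ ⁅Subgroup.closure ({X, Y} : Set G), Subgroup.closure ({X, Y} : Set G)⁆,
      Y * W = W * Y := by
  set H := Subgroup.closure ({X, Y} : Set G) with hH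
  have key : ⁅H, H⁆ ≤ N := by
    set f := QuotientGroup.mk' N with hf
    rw [← QuotientGroup.ker_mk' N, ← Subgroup.map_eq_bot_iff, Subgroup.map_commutator]
    have hmap : Subgroup.map f H ≤ Subgroup.zpowers (f X) := by
      rw [hH, MonoidHom.map_closure, Subgroup.closure_le]
      rintro z ⟨g, hg, rfl⟩
      rcases hg with rfl | rfl
      · exact Subgroup.mem_zpowers _
      · have : f g = 1 := (QuotientGroup.eq_one_iff g).mpr hY
        rw [this]; exact Subgroup.one_mem _
    refine le_bot_iff.mp ?_
    calc ⁅Subgroup.map f H, Subgroup.map f H⁆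
        ≤ ⁅Subgroup.zpowers (f X), Subgroup.zpowers (f X)⁆ :=
          Subgroup.commutator_mono hmap hmap
      _ ≤ ⊥ := by
          rw [Subgroup.commutator_le]
          rintro g₁ ⟨m, rfl⟩ g₂ ⟨n, rfl⟩
          simp only [commutatorElement_def]
          rw [show (f X ^ m) * (f X ^ n) = f X ^ n * f X ^ m by rw [← zpow_add, ← zpow_add, add_comm]]
          group
          exact Subgroup.mem_bot.mpr rfl
  intro W hW
  exact hcomm Y hY W (key hW)
end

section
/- Let R be a commutative ring, n : ℕ, and i₀ : Fin (n+1) with i₀ + 1 ≤ n (so that i₀ and i₀+1 are indices of Fin (n+1)). Let X and Y be units of the ring Matrix (Fin (n+1)) (Fin (n+1)) R such that the underlying matrix of X is unipotent upper triangular and the underlying matrix of Y lies in U_{i₀,i₀+1}. Let ϖ be the subgroup of the unit group generated by {X, Y}. Then Y commutes with every element of the commutator subgroup ⁅ϖ, ϖ⁆; that is, for all W ∈ ⁅ϖ, ϖ⁆, Y * W = W * Y. -/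
/-!
Put `j₀ = i₀ + 1`. The units `1 + u` with `u` supported in the corner `{i ≤ i₀} × {j₀ ≤ j}` form a
subgroup `N`: corner matrices multiply to zero because `i₀ < j₀`, so `(1 + u)(1 + v) = 1 + u + v`.
In particular `N` is abelian, and it contains `Y`. Conjugation by an upper triangular unit preserves
corner support, so `X` normalizes `N`. Modulo `N`, the group `⟨X, Y⟩` is therefore generated by the
image of `X` alone, hence abelian, so `⁅⟨X, Y⟩, ⟨X, Y⟩⁆ ≤ N`, which commutes with `Y`.
-/

namespace Subgroup

theorem commutator_closure_pair_le_of_mem_normalizer {G : Type*} [Group G] {N : Subgroup G}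
    {x y : G} (hx : x ∈ normalizer (N : Set G)) (hy : y ∈ N) :
    ⁅closure {x, y}, closure {x, y}⁆ ≤ N := by
  set K := normalizer (N : Set G)
  set x' : K := ⟨x, hx⟩
  set y' : K := ⟨y, le_normalizer hy⟩
  have hclosure : closure {x, y} = (closure {x', y'}).map K.subtype := by
    rw [MonoidHom.map_closure, Set.image_pair]; rfl
  set f := QuotientGroup.mk' (N.subgroupOf K)
  have hfy : f y' = 1 := (QuotientGroup.eq_one_iff _).2 (mem_subgroupOf.2 hy)
  have himage : (closure {x', y'}).map f = zpowers (f x') := by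
    rw [MonoidHom.map_closure, Set.image_pair, hfy, Set.pair_comm, closure_insert_one,
      zpowers_eq_closure]
  have hquot : ⁅closure {x', y'}, closure {x', y'}⁆ ≤ N.subgroupOf K := by
    rw [← QuotientGroup.ker_mk' (N.subgroupOf K), ← map_eq_bot_iff, map_commutator, himage,
      commutator_self_eq_bot_iff]
    infer_instance
  rw [hclosure, ← map_commutator]
  calc _ ≤ (N.subgroupOf K).map K.subtype := map_mono hquot
    _ ≤ N := (subgroupOf_map_subtype N K).trans_le inf_le_left

end Subgroup

namespace Matrix

variable {ι R : Type*} [LinearOrder ι] [Ring R] {i₀ j₀ : ι}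

def SupportedInCorner (i₀ j₀ : ι) (b : Matrix ι ι R) : Prop :=
  ∀ i j, ¬(i ≤ i₀ ∧ j₀ ≤ j) → b i j = 0

namespace SupportedInCorner

variable {b c : Matrix ι ι R}

theorem zero : SupportedInCorner i₀ j₀ (0 : Matrix ι ι R) := fun _ _ _ => rfl

theorem add (hb : SupportedInCorner i₀ j₀ b) (hc : SupportedInCorner i₀ j₀ c) :
    SupportedInCorner i₀ j₀ (b + c) := fun i j h => by simp [hb i j h, hc i j h]

theorem neg (hb : SupportedInCorner i₀ j₀ b) : SupportedInCorner i₀ j₀ (-b) :=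
  fun i j h => by simp [hb i j h]

variable [Fintype ι]

theorem mul_blockTriangular (hb : SupportedInCorner i₀ j₀ b) (hc : c.BlockTriangular id) :
    SupportedInCorner i₀ j₀ (b * c) := by
  intro i j hij
  rw [mul_apply]
  refine Finset.sum_eq_zero fun k _ => ?_
  by_cases hk : i ≤ i₀ ∧ j₀ ≤ k
  · rw [hc (lt_of_lt_of_le (lt_of_not_ge fun h => hij ⟨hk.1, h⟩) hk.2), mul_zero]
  · rw [hb i k hk, zero_mul]

theorem blockTriangular_mul (hb : b.BlockTriangular id) (hc : SupportedInCorner i₀ j₀ c) :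
    SupportedInCorner i₀ j₀ (b * c) := by
  intro i j hij
  rw [mul_apply]
  refine Finset.sum_eq_zero fun k _ => ?_
  by_cases hk : k ≤ i₀ ∧ j₀ ≤ j
  · rw [hb (lt_of_le_of_lt hk.1 (lt_of_not_ge fun h => hij ⟨h, hk.2⟩)), zero_mul]
  · rw [hc k j hk, mul_zero]

theorem mul_eq_zero (h₀ : i₀ < j₀) (hb : SupportedInCorner i₀ j₀ b)
    (hc : SupportedInCorner i₀ j₀ c) : b * c = 0 := by
  ext i j
  rw [mul_apply, zero_apply]
  refine Finset.sum_eq_zero fun k _ => ?_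
  by_cases hk : i ≤ i₀ ∧ j₀ ≤ k
  · rw [hc k j fun h => (h₀.trans_le (hk.2.trans h.1)).false, mul_zero]
  · rw [hb i k hk, zero_mul]

end SupportedInCorner

variable [Fintype ι] [DecidableEq ι]

variable (R) in
/-- For `i₀ < j₀` and `ι = Fin (n + 1)` these are the units whose matrix lies in `U_{i₀,j₀}`. -/
def cornerUnipotent (i₀ j₀ : ι) (h₀ : i₀ < j₀) : Subgroup (Matrix ι ι R)ˣ where
  carrier := {W | SupportedInCorner i₀ j₀ ((W : Matrix ι ι R) - 1)}
  one_mem' := by simpa using SupportedInCorner.zero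
  mul_mem' {a b} ha hb := by
    have h : (a * b : Matrix ι ι R) - 1 = (a - 1) + (b - 1) + (a - 1) * (b - 1) := by noncomm_ring
    show SupportedInCorner i₀ j₀ ((↑(a * b) : Matrix ι ι R) - 1)
    rw [Units.val_mul, h, ha.mul_eq_zero h₀ hb, add_zero]
    exact ha.add hb
  inv_mem' {a} ha := by
    have h : (a : Matrix ι ι R) * (1 - (a - 1)) = 1 := by
      have := ha.mul_eq_zero h₀ ha
      calc _ = 1 - (a - 1) * (a - 1 : Matrix ι ι R) := by noncomm_ring
        _ = 1 := by rw [this, sub_zero]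
    show SupportedInCorner i₀ j₀ ((↑a⁻¹ : Matrix ι ι R) - 1)
    rw [Units.inv_eq_of_mul_eq_one_right h, sub_sub_cancel_left]
    exact ha.neg

theorem mul_comm_of_mem_cornerUnipotent {h₀ : i₀ < j₀} {V W : (Matrix ι ι R)ˣ}
    (hV : V ∈ cornerUnipotent R i₀ j₀ h₀) (hW : W ∈ cornerUnipotent R i₀ j₀ h₀) :
    V * W = W * V := by
  have expand (A B : Matrix ι ι R) : A * B = (A - 1) + (B - 1) + (A - 1) * (B - 1) + 1 := by
    noncomm_ring
  ext1
  rw [Units.val_mul, Units.val_mul, expand V, expand W, SupportedInCorner.mul_eq_zero h₀ hV hW,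
    SupportedInCorner.mul_eq_zero h₀ hW hV, add_comm (_ - 1)]

theorem conj_mem_cornerUnipotent {h₀ : i₀ < j₀} {g W : (Matrix ι ι R)ˣ}
    (hg : (g : Matrix ι ι R).BlockTriangular id) (hg' : (↑g⁻¹ : Matrix ι ι R).BlockTriangular id)
    (hW : W ∈ cornerUnipotent R i₀ j₀ h₀) : g * W * g⁻¹ ∈ cornerUnipotent R i₀ j₀ h₀ := by
  have h : (↑(g * W * g⁻¹) : Matrix ι ι R) - 1 =
      g * (W - 1 : Matrix ι ι R) * (↑g⁻¹ : Matrix ι ι R) := by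
    rw [Units.val_mul, Units.val_mul, mul_sub, sub_mul, mul_one, Units.mul_inv]
  show SupportedInCorner i₀ j₀ _
  rw [h]
  exact (SupportedInCorner.blockTriangular_mul hg hW).mul_blockTriangular hg'

theorem mem_normalizer_cornerUnipotent {h₀ : i₀ < j₀} {g : (Matrix ι ι R)ˣ}
    (hg : (g : Matrix ι ι R).BlockTriangular id) (hg' : (↑g⁻¹ : Matrix ι ι R).BlockTriangular id) :
    g ∈ Subgroup.normalizer (cornerUnipotent R i₀ j₀ h₀ : Set (Matrix ι ι R)ˣ) := by
  refine Subgroup.mem_normalizer_iff.2 fun W => ⟨conj_mem_cornerUnipotent hg hg', fun hW => ?_⟩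
  have := conj_mem_cornerUnipotent (g := g⁻¹) hg' (by rwa [inv_inv]) hW
  rwa [inv_inv, ← mul_assoc, ← mul_assoc, inv_mul_cancel, one_mul, mul_assoc, inv_mul_cancel,
    mul_one] at this

theorem BlockTriangular.units_inv {R : Type*} [CommRing R] {M : (Matrix ι ι R)ˣ}
    (hM : (M : Matrix ι ι R).BlockTriangular id) : (↑M⁻¹ : Matrix ι ι R).BlockTriangular id := by
  have := M.invertible
  rw [coe_units_inv]
  exact blockTriangular_inv_of_blockTriangular hM

end Matrix

section UnipotentUT

open Matrix

variable {R : Type*} [CommRing R] {n : ℕ}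

theorem IsUnipotentUT.blockTriangular {M : Matrix (Fin (n + 1)) (Fin (n + 1)) R}
    (hM : IsUnipotentUT M) : M.BlockTriangular id :=
  fun i j h => hM.2 i j h

theorem MemU.mem_cornerUnipotent {i₀ j₀ : Fin (n + 1)} (h₀ : i₀ < j₀)
    {M : (Matrix (Fin (n + 1)) (Fin (n + 1)) R)ˣ}
    (hM : MemU i₀ j₀ (M : Matrix (Fin (n + 1)) (Fin (n + 1)) R)) :
    M ∈ cornerUnipotent R i₀ j₀ h₀ := by
  intro i j hij
  rw [Matrix.sub_apply]
  obtain rfl | hne := eq_or_ne i j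
  · rw [hM.1.1, one_apply_eq, sub_self]
  · rw [hM.2 i j hne hij, one_apply_ne hne, sub_zero]

end UnipotentUT

/-- for units `X, Y` of the matrix ring with `X` unipotent upper
triangular and `Y ∈ U_{i₀, i₀+1}`, and `ϖ` the subgroup of units generated by
`{X, Y}`, `Y` commutes with every element of `⁅ϖ, ϖ⁆`. -/
theorem stmt_8 {R : Type*} [CommRing R] {n : ℕ} (i₀ : Fin (n + 1))
    (hi₀ : (i₀ : ℕ) + 1 ≤ n)
    (X Y : (Matrix (Fin (n + 1)) (Fin (n + 1)) R)ˣ)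
    (hX : IsUnipotentUT (X : Matrix (Fin (n + 1)) (Fin (n + 1)) R))
    (hY : MemU i₀ (⟨(i₀ : ℕ) + 1, by omega⟩ : Fin (n + 1))
      (Y : Matrix (Fin (n + 1)) (Fin (n + 1)) R)) :
    ∀ W ∈ ⁅Subgroup.closure ({X, Y} : Set (Matrix (Fin (n + 1)) (Fin (n + 1)) R)ˣ),
        Subgroup.closure ({X, Y} : Set (Matrix (Fin (n + 1)) (Fin (n + 1)) R)ˣ)⁆,
      Y * W = W * Y := by
  intro W hW
  have h₀ : i₀ < ⟨(i₀ : ℕ) + 1, by omega⟩ := Fin.lt_def.2 (Nat.lt_succ_self _)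
  have hYU := hY.mem_cornerUnipotent h₀
  have hXN := Matrix.mem_normalizer_cornerUnipotent (h₀ := h₀) hX.blockTriangular
    hX.blockTriangular.units_inv
  exact Matrix.mul_comm_of_mem_cornerUnipotent hYU
    (Subgroup.commutator_closure_pair_le_of_mem_normalizer hXN hYU hW)
end

section
/- Let n and r be positive natural numbers, J : Fin n → Fin r a function, and k : Fin r. Define the (n+1)×(n+1) matrix M over ℚ (indexed by Fin (n+1)) by: M i i = 1 for all i; for i < j, M i j = 1/(j-i)! if J v = k for every v : Fin n with i ≤ v < j (comparing via the natural number values), and M i j = 0 otherwise; and M i j = 0 for j < i. Then for every positive natural number N and all indices i ≤ j, (M^N) i j = N^(j-i) * (M i j). -/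
/-- the matrix `M = φ_J(γ_k)` — with `1`s on the diagonal, `0`s below,
and `M i j = 1/(j-i)!` when `J v = k` for all `i ≤ v < j` and `0` otherwise —
satisfies `(M^N) i j = N^(j-i) * (M i j)` for all `N > 0` and `i ≤ j`. -/
theorem stmt_9 (n r : ℕ) (hn : 0 < n) (hr : 0 < r)
    (J : Fin n → Fin r) (k : Fin r)
    (M : Matrix (Fin (n + 1)) (Fin (n + 1)) ℚ)
    (hdiag : ∀ i, M i i = 1)
    (hlow : ∀ i j : Fin (n + 1), j < i → M i j = 0)
    (hup : ∀ i j : Fin (n + 1), i < j →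
      M i j = if ∀ v : Fin n, (i : ℕ) ≤ (v : ℕ) → (v : ℕ) < (j : ℕ) → J v = k
        then (((j : ℕ) - (i : ℕ)).factorial : ℚ)⁻¹ else 0) :
    ∀ N : ℕ, 0 < N → ∀ i j : Fin (n + 1), i ≤ j →
      (M ^ N) i j = (N : ℚ) ^ ((j : ℕ) - (i : ℕ)) * M i j := by
  -- key multiplicative identity
  have key : ∀ i l j : Fin (n + 1), i ≤ l → l ≤ j →
      M i l * M l j = ((((j : ℕ) - (i : ℕ)).choose ((l : ℕ) - (i : ℕ)) : ℕ) : ℚ) * M i j := by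
    intro i l j hil hlj
    rcases eq_or_lt_of_le hil with h1 | h1
    · subst h1
      rw [hdiag, Nat.sub_self, Nat.choose_zero_right]; push_cast; ring
    rcases eq_or_lt_of_le hlj with h2 | h2
    · subst h2
      rw [hdiag, Nat.choose_self]; push_cast; ring
    have hij : i < j := lt_trans h1 h2
    have h1' : (i : ℕ) < (l : ℕ) := h1
    have h2' : (l : ℕ) < (j : ℕ) := h2
    rw [hup i l h1, hup l j h2, hup i j hij]
    by_cases hP : ∀ v : Fin n, (i : ℕ) ≤ (v : ℕ) → (v : ℕ) < (j : ℕ) → J v = k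
    · rw [if_pos hP, if_pos (fun v hv1 hv2 => hP v hv1 (lt_of_lt_of_le hv2 (le_of_lt h2'))),
        if_pos (fun v hv1 hv2 => hP v (le_trans (le_of_lt h1') hv1) hv2)]
      have hle : (l : ℕ) - (i : ℕ) ≤ (j : ℕ) - (i : ℕ) := by omega
      have hfac := Nat.choose_mul_factorial_mul_factorial hle
      have heq : (j : ℕ) - (i : ℕ) - ((l : ℕ) - (i : ℕ)) = (j : ℕ) - (l : ℕ) := by omega
      rw [heq] at hfac
      have hfac' : ((((j : ℕ) - (i : ℕ)).choose ((l : ℕ) - (i : ℕ)) : ℚ)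
          * (((l : ℕ) - (i : ℕ)).factorial : ℚ) * (((j : ℕ) - (l : ℕ)).factorial : ℚ)
          = (((j : ℕ) - (i : ℕ)).factorial : ℚ)) := by exact_mod_cast congrArg Nat.cast hfac
      have hz1 : ((((l : ℕ) - (i : ℕ)).factorial : ℚ)) ≠ 0 := by
        exact_mod_cast Nat.factorial_ne_zero _
      have hz2 : ((((j : ℕ) - (l : ℕ)).factorial : ℚ)) ≠ 0 := by
        exact_mod_cast Nat.factorial_ne_zero _
      have hz3 : ((((j : ℕ) - (i : ℕ)).factorial : ℚ)) ≠ 0 := by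
        exact_mod_cast Nat.factorial_ne_zero _
      field_simp
      linarith [hfac']
    · rw [if_neg hP]
      push_neg at hP
      obtain ⟨v, hv1, hv2, hv3⟩ := hP
      by_cases hvl : (v : ℕ) < (l : ℕ)
      · rw [if_neg (fun h : ∀ v : Fin n, (i : ℕ) ≤ (v : ℕ) → (v : ℕ) < (l : ℕ) → J v = k =>
          hv3 (h v hv1 hvl))]
        ring
      · rw [if_neg (fun h : ∀ v : Fin n, (l : ℕ) ≤ (v : ℕ) → (v : ℕ) < (j : ℕ) → J v = k =>
          hv3 (h v (by omega) hv2))]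
        ring
  -- powers are upper triangular
  have tri : ∀ N : ℕ, ∀ i j : Fin (n + 1), j < i → (M ^ N) i j = 0 := by
    intro N
    induction N with
    | zero =>
      intro i j hij
      simp [Matrix.one_apply, (Fin.ne_of_lt hij).symm]
    | succ N ih =>
      intro i j hij
      rw [pow_succ, Matrix.mul_apply]
      apply Finset.sum_eq_zero
      intro l _
      by_cases hl : l < i
      · rw [ih i l hl, zero_mul]
      · rw [hlow l j (lt_of_lt_of_le hij (le_of_not_gt hl)), mul_zero]
  -- the binomial sum identity
  have hsum : ∀ (N : ℕ) (i j : Fin (n + 1)), i ≤ j →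
      (∑ l : Fin (n + 1), (if (i : ℕ) ≤ (l : ℕ) ∧ (l : ℕ) ≤ (j : ℕ) then
        (N : ℚ) ^ ((l : ℕ) - (i : ℕ))
          * ((((j : ℕ) - (i : ℕ)).choose ((l : ℕ) - (i : ℕ)) : ℕ) : ℚ) else 0))
      = ((N : ℚ) + 1) ^ ((j : ℕ) - (i : ℕ)) := by
    intro N i j hij
    set a := (i : ℕ) with ha
    set c := (j : ℕ) with hc
    have hac : a ≤ c := hij
    have hcn : c < n + 1 := j.isLt
    set g : ℕ → ℚ := fun t => if a ≤ t ∧ t ≤ c then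
      (N : ℚ) ^ (t - a) * (((c - a).choose (t - a) : ℕ) : ℚ) else 0 with hg
    have e1 : (∑ l : Fin (n + 1), g (l : ℕ)) = ∑ t ∈ Finset.range (n + 1), g t :=
      Fin.sum_univ_eq_sum_range g (n + 1)
    calc (∑ l : Fin (n + 1), g (l : ℕ))
        = ∑ t ∈ Finset.range (n + 1), g t := e1
      _ = ∑ t ∈ Finset.Ico a (c + 1), g t := by
          symm
          apply Finset.sum_subset
          · intro t ht
            simp only [Finset.mem_Ico] at ht
            simp only [Finset.mem_range]; omega
          · intro t _ ht
            simp only [Finset.mem_Ico] at ht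
            rw [hg]; simp only []
            rw [if_neg (by omega)]
      _ = ∑ m ∈ Finset.range (c + 1 - a), g (a + m) := Finset.sum_Ico_eq_sum_range _ _ _
      _ = ∑ m ∈ Finset.range (c - a + 1), (N : ℚ) ^ m * (((c - a).choose m : ℕ) : ℚ) := by
          have : c + 1 - a = c - a + 1 := by omega
          rw [this]
          apply Finset.sum_congr rfl
          intro m hm
          simp only [Finset.mem_range] at hm
          rw [hg]; simp only []
          rw [if_pos (by omega)]
          have hma : a + m - a = m := by omega
          rw [hma]
      _ = ((N : ℚ) + 1) ^ (c - a) := by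
          rw [add_pow (N : ℚ) 1 (c - a)]
          apply Finset.sum_congr rfl
          intro m _
          rw [one_pow, mul_one]
  -- main induction
  intro N hN
  induction N with
  | zero => exact absurd hN (lt_irrefl 0)
  | succ N ih =>
    intro i j hij
    by_cases hN0 : N = 0
    · subst hN0
      rw [pow_one]
      norm_num
    have hN' : 0 < N := Nat.pos_of_ne_zero hN0
    rw [pow_succ, Matrix.mul_apply]
    have hterm : ∀ l : Fin (n + 1), (M ^ N) i l * M l j =
        (if (i : ℕ) ≤ (l : ℕ) ∧ (l : ℕ) ≤ (j : ℕ) then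
          (N : ℚ) ^ ((l : ℕ) - (i : ℕ))
            * ((((j : ℕ) - (i : ℕ)).choose ((l : ℕ) - (i : ℕ)) : ℕ) : ℚ) else 0) * M i j := by
      intro l
      by_cases h1 : (l : ℕ) < (i : ℕ)
      · rw [tri N i l h1, zero_mul, if_neg (by omega), zero_mul]
      by_cases h2 : (j : ℕ) < (l : ℕ)
      · rw [hlow l j h2, mul_zero, if_neg (by omega), zero_mul]
      have hil : i ≤ l := le_of_not_gt h1
      have hlj : l ≤ j := le_of_not_gt h2
      rw [ih hN' i l hil, if_pos ⟨hil, hlj⟩, mul_assoc, key i l j hil hlj]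
      ring
    rw [Finset.sum_congr rfl (fun l _ => hterm l), ← Finset.sum_mul, hsum N i j hij]
    have : ((N : ℚ) + 1) = ((N + 1 : ℕ) : ℚ) := by push_cast; ring
    rw [this]
end
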